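/- Suppose the infinite word x is not ultimately periodic and lim inf_{n→∞} p(n, x)/n < 2. Then for each n ≥ 1 there exists a unique essential right-special factor of x of length n. -/

import Mathlib

open Filter

variable {A : Type*}

/-- The factor of the infinite word `x` of length `n` starting at position `j` (0-indexed). -/
def subwordAt (x : ℕ → A) (j n : ℕ) : List A := (List.range n).map fun i => x (j + i)

/-- `w` is a factor (subword) of the infinite word `x`. -/
def IsFactor (w : List A) (x : ℕ → A) : Prop := ∃ j, subwordAt x j w.length = w

/-- The subword complexity `p(n, x)`: the number of distinct length-`n` factors of `x`. -/
noncomputable def complexity (x : ℕ → A) (n : ℕ) : ℕ :=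
  Set.ncard {w : List A | w.length = n ∧ IsFactor w x}

/-- `x` is ultimately periodic. -/
def UltimatelyPeriodic (x : ℕ → A) : Prop := ∃ N T, 0 < T ∧ ∀ i ≥ N, x (i + T) = x i

/-- `w` is a left-special factor of `x`. -/
def LeftSpecial (w : List A) (x : ℕ → A) : Prop :=
  ∃ a b : A, a ≠ b ∧ IsFactor (a :: w) x ∧ IsFactor (b :: w) x

/-- `w` is a right-special factor of `x`. -/
def RightSpecial (w : List A) (x : ℕ → A) : Prop :=
  ∃ a b : A, a ≠ b ∧ IsFactor (w ++ [a]) x ∧ IsFactor (w ++ [b]) x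

/-- `w` occurs infinitely many times in `x`. -/
def OccursInfinitely (w : List A) (x : ℕ → A) : Prop :=
  {j : ℕ | subwordAt x j w.length = w}.Infinite

/-- `x` is `n`-recurrent: every length-`n` factor occurs infinitely often. -/
def NRecurrent (n : ℕ) (x : ℕ → A) : Prop :=
  ∀ j : ℕ, {i : ℕ | subwordAt x i n = subwordAt x j n}.Infinite

/-- The shift of `x` by `s` places. -/
def shiftWord (x : ℕ → A) (s : ℕ) : ℕ → A := fun i => x (s + i)

/-- `s_m`: the length of the `m`-th non-recurrent prefix of `x`. -/
noncomputable def srec (x : ℕ → A) (m : ℕ) : ℕ := sInf {s : ℕ | NRecurrent m (shiftWord x s)}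

/-- `z_m`: the maximal `m`-recurrent tail of `x`, so that `x = a_m z_m`. -/
noncomputable def ztail (x : ℕ → A) (m : ℕ) : ℕ → A := shiftWord x (srec x m)

/-- The repetition function `r(n, x)`: the least `m ≥ 1` such that
`x_{m+1} … x_{m+n} = x_{i+1} … x_{i+n}` for some `0 ≤ i < m`. -/
noncomputable def repFn (x : ℕ → A) (n : ℕ) : ℕ :=
  sInf {m : ℕ | 0 < m ∧ ∃ i < m, subwordAt x m n = subwordAt x i n}

/-- A right-special factor `w` is essential if it is a suffix of right-special
factors of every length `m ≥ |w|`. -/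
def EssentialRightSpecial (w : List A) (x : ℕ → A) : Prop :=
  RightSpecial w x ∧
    ∀ m, w.length ≤ m → ∃ W : List A, W.length = m ∧ RightSpecial W x ∧ W.drop (m - w.length) = w

/-- `C` is (the word read along) a cycle at `w` in the Rauzy graph `𝒢_n(y)`:
it has length `> n`, prefix `w`, suffix `w`, and is a factor of `y`. -/
def IsCycleAt (y : ℕ → A) (n : ℕ) (w C : List A) : Prop :=
  n < C.length ∧ C.take n = w ∧ C.drop (C.length - n) = w ∧ IsFactor C y

/-- The Rauzy graph `𝒢_n(y)` is of `∞`-shape with bi-special vertex `w`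
and the two (simple) cycles `U` and `V`. -/
def InftyShape (y : ℕ → A) (n : ℕ) (w U V : List A) : Prop :=
  w.length = n ∧ LeftSpecial w y ∧ RightSpecial w y ∧
  (∀ v : List A, v.length = n → IsFactor v y → (LeftSpecial v y ∨ RightSpecial v y) → v = w) ∧
  IsCycleAt y n w U ∧ IsCycleAt y n w V ∧ U ≠ V ∧
  (∀ j, 0 < j → j < U.length - n → (U.drop j).take n ≠ w) ∧
  (∀ j, 0 < j → j < V.length - n → (V.drop j).take n ≠ w) ∧
  (∀ v : List A, v.length = n → IsFactor v y →
    (∃ j ≤ U.length - n, (U.drop j).take n = v) ∨ (∃ j ≤ V.length - n, (V.drop j).take n = v))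

/-- The word read along the concatenated path `U V^b U`, where `U`, `V` are
cycles at a vertex of length `n` (gluing overlaps of length `n`). -/
def cyclePow (n : ℕ) (U V : List A) (b : ℕ) : List A :=
  U ++ (List.replicate b (V.drop n)).flatten ++ U.drop n

/-- The irrationality exponent of a real number, valued in `ℝ≥0∞`. -/
noncomputable def irrationalityExponent (ξ : ℝ) : ENNReal :=
  ⨆ (μ : ℝ) (_ : {q : ℕ | 0 < q ∧ ∃ p : ℤ, |ξ - p / q| < 1 / (q : ℝ) ^ μ}.Infinite),
    ENNReal.ofReal μ

/-!
Since `x` is not ultimately periodic, it has right-special factors of every length, and a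
König-type compactness argument (pigeonhole on their length-`n` suffixes) yields an essential
right-special factor of each length `n`. If there were two distinct ones of length `n`, then for
every `m ≥ n` they would be suffixes of two distinct right-special factors of length `m`, each
contributing an extra right extension, so `p(m + 1, x) ≥ p(m, x) + 2`. Hence `p(m, x) ≥ 2m - 2n`
and `lim inf p(m, x)/m ≥ 2`.
-/

open Topology ENNReal

def factorsOfLength (x : ℕ → A) (n : ℕ) : Set (List A) :=
  {w | w.length = n ∧ IsFactor w x}

lemma complexity_eq_ncard (x : ℕ → A) (n : ℕ) :
    complexity x n = (factorsOfLength x n).ncard := rfl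

lemma mem_factorsOfLength {x : ℕ → A} {n : ℕ} {w : List A} :
    w ∈ factorsOfLength x n ↔ w.length = n ∧ IsFactor w x := Iff.rfl

lemma factorsOfLength_finite [Finite A] (x : ℕ → A) (n : ℕ) :
    (factorsOfLength x n).Finite :=
  (List.finite_length_eq A n).subset fun _ hw => hw.1

@[simp]
lemma subwordAt_length (x : ℕ → A) (j n : ℕ) : (subwordAt x j n).length = n := by
  simp [subwordAt]

lemma subwordAt_succ (x : ℕ → A) (j n : ℕ) :
    subwordAt x j (n + 1) = subwordAt x j n ++ [x (j + n)] := by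
  simp [subwordAt, List.range_succ]

lemma subwordAt_drop (x : ℕ → A) (j n k : ℕ) :
    (subwordAt x j n).drop k = subwordAt x (j + k) (n - k) := by
  apply List.ext_getElem
  · simp
  · intro i _ _
    simp only [subwordAt, List.getElem_drop, List.getElem_map, List.getElem_range, add_assoc]

lemma isFactor_subwordAt (x : ℕ → A) (j n : ℕ) : IsFactor (subwordAt x j n) x :=
  ⟨j, by rw [subwordAt_length]⟩

lemma IsFactor.drop {w : List A} {x : ℕ → A} (h : IsFactor w x) (k : ℕ) :
    IsFactor (w.drop k) x := by
  obtain ⟨j, hj⟩ := h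
  refine ⟨j + k, ?_⟩
  rw [List.length_drop, ← hj, subwordAt_length, subwordAt_drop]

lemma IsFactor.exists_append_singleton {w : List A} {x : ℕ → A} (h : IsFactor w x) :
    ∃ a, IsFactor (w ++ [a]) x := by
  obtain ⟨j, hj⟩ := h
  refine ⟨x (j + w.length), j, ?_⟩
  rw [List.length_append, List.length_singleton, subwordAt_succ, hj]

lemma RightSpecial.drop {w : List A} {x : ℕ → A} (h : RightSpecial w x) {k : ℕ}
    (hk : k ≤ w.length) : RightSpecial (w.drop k) x := by
  obtain ⟨a, b, hab, ha, hb⟩ := h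
  refine ⟨a, b, hab, ?_, ?_⟩ <;> rw [← List.drop_append_of_le_length hk]
  exacts [ha.drop k, hb.drop k]

/-- Without right-special factors of length `n`, the length-`n` window at position `j`
determines `x (j + n)`; two equal windows then propagate forever. -/
lemma ultimatelyPeriodic_of_forall_not_rightSpecial [Finite A] {x : ℕ → A} {n : ℕ}
    (h : ∀ w : List A, w.length = n → ¬ RightSpecial w x) : UltimatelyPeriodic x := by
  have next : ∀ j k, subwordAt x j n = subwordAt x k n → x (j + n) = x (k + n) := by
    intro j k hjk
    by_contra hne
    exact h (subwordAt x j n) (subwordAt_length x j n)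
      ⟨_, _, hne, ⟨j, by simp [subwordAt_succ]⟩, ⟨k, by simp [subwordAt_succ, hjk]⟩⟩
  obtain ⟨j, k, hjk, hwin⟩ := (factorsOfLength_finite x n).exists_lt_map_eq_of_forall_mem
    (f := fun j => subwordAt x j n)
    fun j => mem_factorsOfLength.2 ⟨subwordAt_length x j n, isFactor_subwordAt x j n⟩
  have hshift : ∀ d, subwordAt x (j + d) n = subwordAt x (k + d) n := by
    intro d
    induction d with
    | zero => exact hwin
    | succ d ih =>
      have hlong : subwordAt x (j + d) (n + 1) = subwordAt x (k + d) (n + 1) := by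
        rw [subwordAt_succ, subwordAt_succ, ih, next _ _ ih]
      simpa [subwordAt_drop, add_assoc] using congrArg (List.drop 1) hlong
  refine ⟨j + n, k - j, by omega, fun i hi => ?_⟩
  convert (next _ _ (hshift (i - j - n))).symm using 2 <;> omega

lemma exists_rightSpecial_of_not_ultimatelyPeriodic [Finite A] {x : ℕ → A}
    (hx : ¬ UltimatelyPeriodic x) (n : ℕ) :
    ∃ w : List A, w.length = n ∧ RightSpecial w x := by
  by_contra! h
  exact hx (ultimatelyPeriodic_of_forall_not_rightSpecial h)

lemma exists_essentialRightSpecial [Finite A] {x : ℕ → A}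
    (h : ∀ m, ∃ w : List A, w.length = m ∧ RightSpecial w x) (n : ℕ) :
    ∃ w : List A, w.length = n ∧ EssentialRightSpecial w x := by
  choose R hRlen hR using h
  have : Finite {w : List A // w.length = n} := (List.finite_length_eq A n).to_subtype
  let suffix : ℕ → {w : List A // w.length = n} :=
    fun k => ⟨(R (n + k)).drop k, by simp [hRlen]⟩
  obtain ⟨⟨w, hw⟩, hinf⟩ := Finite.exists_infinite_fiber suffix
  rw [Set.infinite_coe_iff] at hinf
  have hsuffix : ∀ k ∈ suffix ⁻¹' {⟨w, hw⟩}, (R (n + k)).drop k = w :=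
    fun k hk => congrArg Subtype.val hk
  refine ⟨w, hw, ?_, fun m hm => ?_⟩
  · obtain ⟨k, hk⟩ := hinf.nonempty
    rw [← hsuffix k hk]
    exact (hR _).drop (by simp [hRlen])
  · obtain ⟨k, hk, hmk⟩ := hinf.exists_gt (m - n)
    refine ⟨(R (n + k)).drop (n + k - m), by simp [hRlen]; omega,
      (hR _).drop (by simp [hRlen]), ?_⟩
    rw [List.drop_drop, hw, show n + k - m + (m - n) = k by omega]
    exact hsuffix k hk

/-- Deleting the last letter maps the length-`(m + 1)` factors onto the length-`m` ones even
after one extension of each of `w₁` and `w₂` has been removed. -/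
lemma complexity_add_two_le [Finite A] {x : ℕ → A} {m : ℕ} {w₁ w₂ : List A}
    (h₁ : w₁.length = m) (h₂ : w₂.length = m) (hne : w₁ ≠ w₂)
    (hr₁ : RightSpecial w₁ x) (hr₂ : RightSpecial w₂ x) :
    complexity x m + 2 ≤ complexity x (m + 1) := by
  obtain ⟨a₁, b₁, hab₁, ha₁, hb₁⟩ := hr₁
  obtain ⟨a₂, b₂, hab₂, ha₂, hb₂⟩ := hr₂
  set T : Set (List A) := {w₁ ++ [a₁], w₂ ++ [a₂]}
  have hT : T ⊆ factorsOfLength x (m + 1) := by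
    rintro _ (rfl | rfl)
    exacts [⟨by simp [h₁], ha₁⟩, ⟨by simp [h₂], ha₂⟩]
  have hsurj : Set.SurjOn List.dropLast (factorsOfLength x (m + 1) \ T)
      (factorsOfLength x m) := by
    rintro v ⟨hv, hvx⟩
    obtain ⟨c, hc, hcT⟩ : ∃ c, IsFactor (v ++ [c]) x ∧ v ++ [c] ∉ T := by
      by_cases hv₁ : v = w₁
      · exact ⟨b₁, hv₁ ▸ hb₁, by simp [T, hv₁, hab₁.symm, hne]⟩
      by_cases hv₂ : v = w₂
      · exact ⟨b₂, hv₂ ▸ hb₂, by simp [T, hv₂, hab₂.symm, Ne.symm hne]⟩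
      obtain ⟨c, hc⟩ := hvx.exists_append_singleton
      exact ⟨c, hc, by simp [T, hv₁, hv₂]⟩
    exact ⟨v ++ [c], ⟨⟨by simp [hv], hc⟩, hcT⟩, List.dropLast_concat⟩
  have hfin := factorsOfLength_finite x (m + 1)
  have hTcard : T.ncard = 2 := Set.ncard_pair (by simp [hne])
  have hle := (Set.ncard_le_ncard hsurj (hfin.sdiff.image _)).trans
    (Set.ncard_image_le hfin.sdiff)
  rw [Set.ncard_sdiff hT, hTcard] at hle
  have hTle := hTcard ▸ Set.ncard_le_ncard hT hfin
  rw [complexity_eq_ncard, complexity_eq_ncard]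
  omega

lemma two_le_liminf_div_of_two_mul_le {f : ℕ → ℕ} {c : ℕ}
    (h : ∀ᶠ m in atTop, 2 * m ≤ f m + c) :
    2 ≤ liminf (fun m => (f m : ℝ≥0∞) / m) atTop := by
  rw [le_liminf_iff]
  intro b hb
  have hc : Tendsto (fun m : ℕ => (c : ℝ≥0∞) / m) atTop (𝓝 0) := by
    simpa using ENNReal.Tendsto.const_div tendsto_nat_nhds_top (Or.inr (natCast_ne_top c))
  filter_upwards [h, hc.eventually (gt_mem_nhds (tsub_pos_of_lt hb)), eventually_gt_atTop 0]
    with m hm hcm hm0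
  have h2 : 2 ≤ (f m : ℝ≥0∞) / m + c / m := by
    rw [ENNReal.div_add_div_same, ENNReal.le_div_iff_mul_le (by simp; omega) (by simp)]
    exact_mod_cast hm
  have hlt : b + c / m < f m / m + c / m := (lt_tsub_iff_left.1 hcm).trans_le h2
  exact (ENNReal.add_lt_add_iff_right (div_ne_top (natCast_ne_top c) (by simp; omega))).1 hlt

lemma two_le_liminf_div_of_add_two_le {f : ℕ → ℕ} {n : ℕ}
    (h : ∀ m ≥ n, f m + 2 ≤ f (m + 1)) :
    2 ≤ liminf (fun m => (f m : ℝ≥0∞) / m) atTop := by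
  refine two_le_liminf_div_of_two_mul_le (c := 2 * n) (eventually_atTop.2 ⟨n, fun m hm => ?_⟩)
  induction m, hm using Nat.le_induction with
  | base => omega
  | succ m hm ih => have := h m hm; omega

theorem unique_essential_rightSpecial {A : Type*} [Fintype A] (x : ℕ → A)
    (hx : ¬ UltimatelyPeriodic x)
    (hliminf : Filter.liminf (fun n : ℕ => (complexity x n : ENNReal) / (n : ENNReal))
      Filter.atTop < 2) :
    ∀ n : ℕ, 1 ≤ n →
      ∃! w : List A, w.length = n ∧ EssentialRightSpecial w x := by
  intro n _
  obtain ⟨w, hw, hwe⟩ :=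
    exists_essentialRightSpecial (exists_rightSpecial_of_not_ultimatelyPeriodic hx) n
  refine ⟨w, ⟨hw, hwe⟩, fun v ⟨hv, hve⟩ => ?_⟩
  by_contra hne
  refine hliminf.not_ge (two_le_liminf_div_of_add_two_le (n := n) fun m hm => ?_)
  obtain ⟨V, hVlen, hV, hVv⟩ := hve.2 m (hv ▸ hm)
  obtain ⟨W, hWlen, hW, hWw⟩ := hwe.2 m (hw ▸ hm)
  have hVW : V ≠ W := fun h => hne (by rw [← hVv, ← hWw, h, hv, hw])
  exact complexity_add_two_le hVlen hWlen hVW hV hW
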